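/- Let p be a prime and n a natural number. The number of p-regular partitions of n (partitions with no part repeated p or more times) equals the number of partitions of n into parts not divisible by p. -/

import Mathlib

open Finset

theorem Nat.Partition.card_count_lt_eq_card_countRestricted {n m : ℕ} (hm : 0 < m) :
    Nat.card {P : n.Partition // ∀ i : ℕ, P.parts.count i < m} = #(countRestricted n m) := by
  classical
  rw [Nat.card_eq_fintype_card, Fintype.card_subtype, countRestricted]
  refine congrArg card (filter_congr fun P _ ↦ ⟨fun h i _ ↦ h i, fun h i ↦ ?_⟩)
  by_cases hi : i ∈ P.parts
  · exact h i hi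
  · rwa [Multiset.count_eq_zero_of_notMem hi]

/-- Glaisher's theorem: the number of `p`-regular partitions of `n` (no part repeated `p` or
more times) equals the number of partitions of `n` into parts not divisible by `p`. -/
theorem stmt_18 (p : ℕ) (hp : p.Prime) (n : ℕ) :
    Nat.card {P : n.Partition // ∀ i : ℕ, P.parts.count i < p} =
      Nat.card {P : n.Partition // ∀ i ∈ P.parts, ¬ p ∣ i} := by
  rw [Nat.Partition.card_count_lt_eq_card_countRestricted hp.pos,
    ← Nat.Partition.card_restricted_eq_card_countRestricted n hp.pos, Nat.card_eq_fintype_card,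
    Fintype.card_subtype]
  rfl
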